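/- For the selective metamorphosis landmark system ṗ = −(∇u(q))ᵀ p − ½ ∇ν(q) |p|², q̇ = u(q) + ν(q) p, with u(x) = Σ_j p_j K(x − q_j), the function h(q,p) = ½ Σ_{i,j} K(q_i − q_j) p_i·p_j + ½ Σ_i ν(q_i)|p_i|² is a first integral: it is constant along every C¹ solution. -/

import Mathlib

open RealInnerProductSpace

private lemma inner_gradient_eq' {E : Type*} [NormedAddCommGroup E] [InnerProductSpace ℝ E]
    [CompleteSpace E] (f : E → ℝ) (x v : E) : ⟪gradient f x, v⟫ = fderiv ℝ f x v := by
  simp [gradient, ← InnerProductSpace.toDual_apply_apply]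

private lemma fderiv_odd_of_even' {E : Type*} [NormedAddCommGroup E] [InnerProductSpace ℝ E]
    (K : E → ℝ) (hK : Differentiable ℝ K) (hKe : ∀ x, K (-x) = K x) (x : E) (v : E) :
    fderiv ℝ K (-x) v = - fderiv ℝ K x v := by
  have h1 : HasFDerivAt (fun y => K (-y))
      ((fderiv ℝ K (-x)).comp (-(ContinuousLinearMap.id ℝ E))) x :=
    (hK (-x)).hasFDerivAt.comp x (hasFDerivAt_id x).neg
  have h2 : HasFDerivAt K ((fderiv ℝ K (-x)).comp (-(ContinuousLinearMap.id ℝ E))) x := by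
    simpa [hKe] using h1
  rw [h2.fderiv]; simp

/-- The selective metamorphosis Hamiltonian
`h(q,p) = ½ ∑_{i,j} K(q_i - q_j) ⟪p_i, p_j⟫ + ½ ∑_i ν(q_i) |p_i|²`
is a first integral of the selective metamorphosis landmark equations
`q̇_i = u(q_i) + ν(q_i) p_i`, `ṗ_i = -(∇u(q_i))ᵀ p_i - ½ ∇ν(q_i) |p_i|²`,
where `u(x) = ∑_j p_j K(x - q_j)` and `(∇u(x))ᵀ p = ∇(x ↦ ⟪u(x), p⟫)`. -/
theorem stmt12 (d M : ℕ) (K : EuclideanSpace ℝ (Fin d) → ℝ)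
    (hK : ContDiff ℝ (⊤ : ℕ∞) K) (hKeven : ∀ x, K (-x) = K x)
    (ν : EuclideanSpace ℝ (Fin d) → ℝ) (hν : ContDiff ℝ 1 ν)
    (q p : ℝ → Fin M → EuclideanSpace ℝ (Fin d))
    (hq : ∀ t, ∀ i, HasDerivAt (fun s => q s i)
      ((∑ j : Fin M, K (q t i - q t j) • p t j) + ν (q t i) • p t i) t)
    (hp : ∀ t, ∀ i, HasDerivAt (fun s => p s i)
      (-(gradient (fun x => ⟪∑ j : Fin M, K (x - q t j) • p t j, p t i⟫) (q t i))
        - (((1 : ℝ) / 2) * ‖p t i‖ ^ 2) • gradient ν (q t i)) t)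
    (t : ℝ) :
    ((1 : ℝ) / 2) * ∑ i : Fin M, ∑ j : Fin M, K (q t i - q t j) * ⟪p t i, p t j⟫
      + ((1 : ℝ) / 2) * ∑ i : Fin M, ν (q t i) * ‖p t i‖ ^ 2
    = ((1 : ℝ) / 2) * ∑ i : Fin M, ∑ j : Fin M, K (q 0 i - q 0 j) * ⟪p 0 i, p 0 j⟫
      + ((1 : ℝ) / 2) * ∑ i : Fin M, ν (q 0 i) * ‖p 0 i‖ ^ 2 := by
  have hKd : Differentiable ℝ K := hK.differentiable (by simp)
  have hνd : Differentiable ℝ ν := hν.differentiable one_ne_zero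
  set h : ℝ → ℝ := fun s =>
    ((1 : ℝ) / 2) * ∑ i : Fin M, ∑ j : Fin M, K (q s i - q s j) * ⟪p s i, p s j⟫
      + ((1 : ℝ) / 2) * ∑ i : Fin M, ν (q s i) * ‖p s i‖ ^ 2 with hh
  suffices hc : ∀ s, HasDerivAt h 0 s by
    exact is_const_of_deriv_eq_zero (fun s => (hc s).differentiableAt)
      (fun s => (hc s).deriv) t 0
  intro s
  set v : Fin M → EuclideanSpace ℝ (Fin d) := fun i =>
    (∑ j : Fin M, K (q s i - q s j) • p s j) + ν (q s i) • p s i with hv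
  set w : Fin M → EuclideanSpace ℝ (Fin d) := fun i =>
    -(gradient (fun x => ⟪∑ j : Fin M, K (x - q s j) • p s j, p s i⟫) (q s i))
      - (((1 : ℝ) / 2) * ‖p s i‖ ^ 2) • gradient ν (q s i) with hw
  have hqv : ∀ i, HasDerivAt (fun σ => q σ i) (v i) s := fun i => by
    simpa only [hv] using hq s i
  have hpw : ∀ i, HasDerivAt (fun σ => p σ i) (w i) s := fun i => by
    simpa only [hw] using hp s i
  -- derivative of each double-sum term
  have hKterm : ∀ i j, HasDerivAt (fun σ => K (q σ i - q σ j) * ⟪p σ i, p σ j⟫)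
      ((fderiv ℝ K (q s i - q s j)) (v i - v j) * ⟪p s i, p s j⟫
        + K (q s i - q s j) * (⟪p s i, w j⟫ + ⟪w i, p s j⟫)) s := by
    intro i j
    have h1 : HasDerivAt (fun σ => K (q σ i - q σ j))
        ((fderiv ℝ K (q s i - q s j)) (v i - v j)) s :=
      (hKd _).hasFDerivAt.comp_hasDerivAt s ((hqv i).sub (hqv j))
    exact h1.mul ((hpw i).inner ℝ (hpw j))
  have hνterm : ∀ i, HasDerivAt (fun σ => ν (q σ i) * ‖p σ i‖ ^ 2)
      ((fderiv ℝ ν (q s i)) (v i) * ‖p s i‖ ^ 2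
        + ν (q s i) * (⟪p s i, w i⟫ + ⟪w i, p s i⟫)) s := by
    intro i
    have h1 : HasDerivAt (fun σ => ν (q σ i)) ((fderiv ℝ ν (q s i)) (v i)) s :=
      (hνd _).hasFDerivAt.comp_hasDerivAt s (hqv i)
    have h2 : HasDerivAt (fun σ => ‖p σ i‖ ^ 2) (⟪p s i, w i⟫ + ⟪w i, p s i⟫) s := by
      simpa only [real_inner_self_eq_norm_sq] using (hpw i).inner ℝ (hpw i)
    exact h1.mul h2
  have hD : HasDerivAt h
      (((1 : ℝ) / 2) * ∑ i : Fin M, ∑ j : Fin M,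
          ((fderiv ℝ K (q s i - q s j)) (v i - v j) * ⟪p s i, p s j⟫
            + K (q s i - q s j) * (⟪p s i, w j⟫ + ⟪w i, p s j⟫))
        + ((1 : ℝ) / 2) * ∑ i : Fin M,
          ((fderiv ℝ ν (q s i)) (v i) * ‖p s i‖ ^ 2
            + ν (q s i) * (⟪p s i, w i⟫ + ⟪w i, p s i⟫))) s := by
    apply HasDerivAt.add
    · exact (HasDerivAt.fun_sum fun i _ => HasDerivAt.fun_sum fun j _ => hKterm i j).const_mul _
    · exact (HasDerivAt.fun_sum fun i _ => hνterm i).const_mul _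
  -- key algebraic facts
  have hA : ∀ i j (x : EuclideanSpace ℝ (Fin d)),
      fderiv ℝ K (q s j - q s i) x = - fderiv ℝ K (q s i - q s j) x := by
    intro i j x
    rw [← neg_sub (q s i) (q s j)]
    exact fderiv_odd_of_even' K hKd hKeven _ _
  have hKs : ∀ i j, K (q s j - q s i) = K (q s i - q s j) := fun i j => by
    rw [← neg_sub (q s i) (q s j)]; exact hKeven _
  set S1 : ℝ := ∑ i : Fin M, ∑ j : Fin M,
    fderiv ℝ K (q s i - q s j) (v i) * ⟪p s i, p s j⟫ with hS1
  set S2 : ℝ := ∑ i : Fin M, ∑ j : Fin M, K (q s i - q s j) * ⟪w i, p s j⟫ with hS2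
  set S3 : ℝ := ∑ i : Fin M, fderiv ℝ ν (q s i) (v i) * ‖p s i‖ ^ 2 with hS3
  set S4 : ℝ := ∑ i : Fin M, ν (q s i) * ⟪w i, p s i⟫ with hS4
  have e1 : (∑ i : Fin M, ∑ j : Fin M,
      ((fderiv ℝ K (q s i - q s j)) (v i - v j) * ⟪p s i, p s j⟫
        + K (q s i - q s j) * (⟪p s i, w j⟫ + ⟪w i, p s j⟫)))
      = 2 * S1 + 2 * S2 := by
    have split : ∀ i j, (fderiv ℝ K (q s i - q s j)) (v i - v j) * ⟪p s i, p s j⟫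
        + K (q s i - q s j) * (⟪p s i, w j⟫ + ⟪w i, p s j⟫)
        = (fderiv ℝ K (q s i - q s j) (v i) * ⟪p s i, p s j⟫
            + K (q s i - q s j) * ⟪w i, p s j⟫)
          + (K (q s i - q s j) * ⟪p s i, w j⟫
            - fderiv ℝ K (q s i - q s j) (v j) * ⟪p s i, p s j⟫) := by
      intro i j; rw [map_sub]; ring
    rw [Finset.sum_congr rfl fun i _ => Finset.sum_congr rfl fun j _ => split i j]
    simp only [Finset.sum_add_distrib]
    have e1b : ∑ i : Fin M, ∑ j : Fin M,
        (K (q s i - q s j) * ⟪p s i, w j⟫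
          - fderiv ℝ K (q s i - q s j) (v j) * ⟪p s i, p s j⟫) = S2 + S1 := by
      have term : ∀ i j : Fin M, K (q s i - q s j) * ⟪p s i, w j⟫
          - fderiv ℝ K (q s i - q s j) (v j) * ⟪p s i, p s j⟫
          = K (q s j - q s i) * ⟪w j, p s i⟫
            + fderiv ℝ K (q s j - q s i) (v j) * ⟪p s j, p s i⟫ := by
        intro i j
        rw [hKs i j, hA i j, real_inner_comm (p s i) (w j),
          real_inner_comm (p s j) (p s i)]
        ring
      rw [Finset.sum_congr rfl fun i _ => Finset.sum_congr rfl fun j _ => term i j,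
        Finset.sum_comm]
      simp only [Finset.sum_add_distrib]; rfl
    rw [e1b, ← hS1, ← hS2]; ring
  have e2 : (∑ i : Fin M, ((fderiv ℝ ν (q s i)) (v i) * ‖p s i‖ ^ 2
      + ν (q s i) * (⟪p s i, w i⟫ + ⟪w i, p s i⟫))) = S3 + 2 * S4 := by
    have term : ∀ i : Fin M, (fderiv ℝ ν (q s i)) (v i) * ‖p s i‖ ^ 2
        + ν (q s i) * (⟪p s i, w i⟫ + ⟪w i, p s i⟫)
        = fderiv ℝ ν (q s i) (v i) * ‖p s i‖ ^ 2 + 2 * (ν (q s i) * ⟪w i, p s i⟫) := by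
      intro i; rw [real_inner_comm (p s i) (w i)]; ring
    rw [Finset.sum_congr rfl fun i _ => term i, Finset.sum_add_distrib,
      ← Finset.mul_sum, hS3, hS4]
  have e3 : S2 + S4 = ∑ i : Fin M, ⟪w i, v i⟫ := by
    rw [hS2, hS4, ← Finset.sum_add_distrib]
    refine Finset.sum_congr rfl fun i _ => ?_
    simp only [hv, inner_add_right, inner_sum, real_inner_smul_right]
  have e4 : ∀ i, ⟪w i, v i⟫
      = -(∑ j : Fin M, fderiv ℝ K (q s i - q s j) (v i) * ⟪p s i, p s j⟫)
        - ((1 : ℝ) / 2) * (fderiv ℝ ν (q s i) (v i) * ‖p s i‖ ^ 2) := by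
    intro i
    have hf : HasFDerivAt (fun x => ⟪∑ j : Fin M, K (x - q s j) • p s j, p s i⟫)
        (∑ j : Fin M, ⟪p s j, p s i⟫ • fderiv ℝ K (q s i - q s j)) (q s i) := by
      have hterm : ∀ j : Fin M, HasFDerivAt (fun x => K (x - q s j) * ⟪p s j, p s i⟫)
          (⟪p s j, p s i⟫ • fderiv ℝ K (q s i - q s j)) (q s i) := by
        intro j
        have h0 : HasFDerivAt (fun x : EuclideanSpace ℝ (Fin d) => K (x - q s j))
            (fderiv ℝ K (q s i - q s j)) (q s i) :=
          (hKd _).hasFDerivAt.comp _ ((hasFDerivAt_id _).sub_const _)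
        exact h0.mul_const _
      have hsum := HasFDerivAt.fun_sum (fun j (_ : j ∈ Finset.univ) => hterm j)
      have hfun : (fun x => ⟪∑ j : Fin M, K (x - q s j) • p s j, p s i⟫)
          = fun x => ∑ j : Fin M, K (x - q s j) * ⟪p s j, p s i⟫ := by
        funext x
        rw [sum_inner]
        exact Finset.sum_congr rfl fun j _ => real_inner_smul_left _ _ _
      rw [hfun]
      exact hsum
    simp only [hw, inner_sub_left, inner_neg_left, real_inner_smul_left]
    rw [inner_gradient_eq', inner_gradient_eq', hf.fderiv,
      ContinuousLinearMap.sum_apply]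
    have term : ∀ j : Fin M, (⟪p s j, p s i⟫ • fderiv ℝ K (q s i - q s j)) (v i)
        = fderiv ℝ K (q s i - q s j) (v i) * ⟪p s i, p s j⟫ := by
      intro j
      rw [ContinuousLinearMap.smul_apply, smul_eq_mul, real_inner_comm (p s j) (p s i)]
      ring
    rw [Finset.sum_congr rfl fun j _ => term j]
    ring
  have e5 : ∑ i : Fin M, ⟪w i, v i⟫ = -S1 - ((1 : ℝ) / 2) * S3 := by
    rw [Finset.sum_congr rfl fun i _ => e4 i, Finset.sum_sub_distrib, hS1, hS3,
      ← Finset.sum_neg_distrib, ← Finset.mul_sum]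
  have hz : (((1 : ℝ) / 2) * ∑ i : Fin M, ∑ j : Fin M,
        ((fderiv ℝ K (q s i - q s j)) (v i - v j) * ⟪p s i, p s j⟫
          + K (q s i - q s j) * (⟪p s i, w j⟫ + ⟪w i, p s j⟫))
      + ((1 : ℝ) / 2) * ∑ i : Fin M,
        ((fderiv ℝ ν (q s i)) (v i) * ‖p s i‖ ^ 2
          + ν (q s i) * (⟪p s i, w i⟫ + ⟪w i, p s i⟫))) = 0 := by
    rw [e1, e2]
    have := e3.trans e5
    linarith
  exact hz ▸ hD
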